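/- arXiv:2412.21070 — 2 statements merged into one kernel-verified Lean document; each statement's English description precedes it below -/
import Mathlib

section
/- Under Kuzmin's limiter (Algorithm 1), for every index i the limited antidiffusive fluxes satisfy the local extremum diminishing bounds q_i(δ_i^min − δ_i) ≤ Σ_{j ∈ N_i} a_{ij} p_{ij} ≤ q_i(δ_i^max − δ_i). -/
noncomputable section

namespace Kuzmin

variable {N : ℕ}

/-- Local maximum `δ_i^max = max(δ_i, max_{j ∈ N_i} δ_j)`. -/
def locMax (Nbr : Fin N → Finset (Fin N)) (δ : Fin N → ℝ) (i : Fin N) : ℝ :=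
  (insert i (Nbr i)).sup' (Finset.insert_nonempty i (Nbr i)) δ

/-- Local minimum `δ_i^min = min(δ_i, min_{j ∈ N_i} δ_j)`. -/
def locMin (Nbr : Fin N → Finset (Fin N)) (δ : Fin N → ℝ) (i : Fin N) : ℝ :=
  (insert i (Nbr i)).inf' (Finset.insert_nonempty i (Nbr i)) δ

/-- Sum of positive antidiffusive fluxes `P_i^+ = Σ_{j ∈ N_i} max(0, p_{ij})`. -/
def Pplus (Nbr : Fin N → Finset (Fin N)) (p : Fin N → Fin N → ℝ) (i : Fin N) : ℝ :=
  ∑ j ∈ Nbr i, max 0 (p i j)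

/-- Sum of negative antidiffusive fluxes `P_i^- = Σ_{j ∈ N_i} min(0, p_{ij})`. -/
def Pminus (Nbr : Fin N → Finset (Fin N)) (p : Fin N → Fin N → ℝ) (i : Fin N) : ℝ :=
  ∑ j ∈ Nbr i, min 0 (p i j)

/-- Upper bound `Q_i^+ = q_i (δ_i^max − δ_i)`. -/
def Qplus (Nbr : Fin N → Finset (Fin N)) (δ q : Fin N → ℝ) (i : Fin N) : ℝ :=
  q i * (locMax Nbr δ i - δ i)

/-- Lower bound `Q_i^- = q_i (δ_i^min − δ_i)`. -/
def Qminus (Nbr : Fin N → Finset (Fin N)) (δ q : Fin N → ℝ) (i : Fin N) : ℝ :=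
  q i * (locMin Nbr δ i - δ i)

/-- `R_i^+ = min(1, Q_i^+ / P_i^+)` if `P_i^+ > 0`, and `1` otherwise. -/
def Rplus (Nbr : Fin N → Finset (Fin N)) (p : Fin N → Fin N → ℝ) (δ q : Fin N → ℝ)
    (i : Fin N) : ℝ :=
  if 0 < Pplus Nbr p i then min 1 (Qplus Nbr δ q i / Pplus Nbr p i) else 1

/-- `R_i^minus = min(1, Q_i^minus / P_i^minus)` if `P_i^minus < 0`, and `1` otherwise. -/
def Rminus (Nbr : Fin N → Finset (Fin N)) (p : Fin N → Fin N → ℝ) (δ q : Fin N → ℝ)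
    (i : Fin N) : ℝ :=
  if Pminus Nbr p i < 0 then min 1 (Qminus Nbr δ q i / Pminus Nbr p i) else 1

/-- The preliminary factor `ā_{ij}`. -/
def abar (Nbr : Fin N → Finset (Fin N)) (p : Fin N → Fin N → ℝ) (δ q : Fin N → ℝ)
    (i j : Fin N) : ℝ :=
  if 0 < p i j then Rplus Nbr p δ q i
  else if p i j < 0 then Rminus Nbr p δ q i
  else 1

/-- The correction factor `a_{ij} = min(ā_{ij}, ā_{ji})` of Kuzmin's limiter. -/
def afac (Nbr : Fin N → Finset (Fin N)) (p : Fin N → Fin N → ℝ) (δ q : Fin N → ℝ)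
    (i j : Fin N) : ℝ :=
  min (abar Nbr p δ q i j) (abar Nbr p δ q j i)

variable (Nbr : Fin N → Finset (Fin N)) (p : Fin N → Fin N → ℝ) (δ q : Fin N → ℝ)

lemma delta_le_locMax (i : Fin N) : δ i ≤ locMax Nbr δ i :=
  Finset.le_sup' δ (Finset.mem_insert_self i _)

lemma locMin_le_delta (i : Fin N) : locMin Nbr δ i ≤ δ i :=
  Finset.inf'_le δ (Finset.mem_insert_self i _)

lemma Qplus_nonneg (hq : ∀ i, 0 ≤ q i) (i : Fin N) : 0 ≤ Qplus Nbr δ q i :=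
  mul_nonneg (hq i) (sub_nonneg.2 (delta_le_locMax Nbr δ i))

lemma Qminus_nonpos (hq : ∀ i, 0 ≤ q i) (i : Fin N) : Qminus Nbr δ q i ≤ 0 :=
  mul_nonpos_of_nonneg_of_nonpos (hq i) (sub_nonpos.2 (locMin_le_delta Nbr δ i))

lemma Pplus_nonneg (i : Fin N) : 0 ≤ Pplus Nbr p i :=
  Finset.sum_nonneg fun j _ => le_max_left _ _

lemma Pminus_nonpos (i : Fin N) : Pminus Nbr p i ≤ 0 :=
  Finset.sum_nonpos fun j _ => min_le_left _ _

lemma Rplus_nonneg (hq : ∀ i, 0 ≤ q i) (i : Fin N) : 0 ≤ Rplus Nbr p δ q i := by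
  unfold Rplus
  split
  · exact le_min zero_le_one (div_nonneg (Qplus_nonneg Nbr δ q hq i) (le_of_lt ‹_›))
  · exact zero_le_one

lemma Rplus_le_one (i : Fin N) : Rplus Nbr p δ q i ≤ 1 := by
  unfold Rplus; split
  · exact min_le_left _ _
  · exact le_refl 1

lemma Rminus_nonneg (hq : ∀ i, 0 ≤ q i) (i : Fin N) : 0 ≤ Rminus Nbr p δ q i := by
  unfold Rminus
  split
  · exact le_min zero_le_one (div_nonneg_of_nonpos
      (Qminus_nonpos Nbr δ q hq i) (le_of_lt ‹_›))
  · exact zero_le_one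

lemma Rminus_le_one (i : Fin N) : Rminus Nbr p δ q i ≤ 1 := by
  unfold Rminus; split
  · exact min_le_left _ _
  · exact le_refl 1

lemma abar_nonneg (hq : ∀ i, 0 ≤ q i) (i j : Fin N) : 0 ≤ abar Nbr p δ q i j := by
  unfold abar
  split
  · exact Rplus_nonneg Nbr p δ q hq i
  split
  · exact Rminus_nonneg Nbr p δ q hq i
  · exact zero_le_one

lemma afac_nonneg (hq : ∀ i, 0 ≤ q i) (i j : Fin N) : 0 ≤ afac Nbr p δ q i j :=
  le_min (abar_nonneg Nbr p δ q hq i j) (abar_nonneg Nbr p δ q hq j i)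

lemma Rplus_mul_Pplus_le (hq : ∀ i, 0 ≤ q i) (i : Fin N) :
    Rplus Nbr p δ q i * Pplus Nbr p i ≤ Qplus Nbr δ q i := by
  unfold Rplus
  split
  · calc min 1 (Qplus Nbr δ q i / Pplus Nbr p i) * Pplus Nbr p i
        ≤ (Qplus Nbr δ q i / Pplus Nbr p i) * Pplus Nbr p i :=
          mul_le_mul_of_nonneg_right (min_le_right _ _) (le_of_lt ‹_›)
      _ = Qplus Nbr δ q i := div_mul_cancel₀ _ (ne_of_gt ‹_›)
  · have h0 : Pplus Nbr p i = 0 := le_antisymm (not_lt.1 ‹_›) (Pplus_nonneg Nbr p i)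
    rw [h0, mul_zero]
    exact Qplus_nonneg Nbr δ q hq i

lemma Qminus_le_Rminus_mul_Pminus (hq : ∀ i, 0 ≤ q i) (i : Fin N) :
    Qminus Nbr δ q i ≤ Rminus Nbr p δ q i * Pminus Nbr p i := by
  unfold Rminus
  split
  · calc Qminus Nbr δ q i
        = (Qminus Nbr δ q i / Pminus Nbr p i) * Pminus Nbr p i :=
          (div_mul_cancel₀ _ (ne_of_lt ‹_›)).symm
      _ ≤ min 1 (Qminus Nbr δ q i / Pminus Nbr p i) * Pminus Nbr p i :=
          mul_le_mul_of_nonpos_right (min_le_right _ _) (le_of_lt ‹_›)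
  · have h0 : Pminus Nbr p i = 0 := le_antisymm (Pminus_nonpos Nbr p i) (not_lt.1 ‹_›)
    rw [h0, mul_zero]
    exact Qminus_nonpos Nbr δ q hq i

end Kuzmin

/-- under Kuzmin's limiter (Algorithm 1), for every index `i` the limited
antidiffusive fluxes satisfy the local extremum diminishing bounds
`q_i (δ_i^min − δ_i) ≤ Σ_{j ∈ N_i} a_{ij} p_{ij} ≤ q_i (δ_i^max − δ_i)`. -/
theorem kuzmin_limiter_led_bounds (N : ℕ) (Nbr : Fin N → Finset (Fin N))
    (hsym : ∀ i j, j ∈ Nbr i ↔ i ∈ Nbr j) (hirr : ∀ i, i ∉ Nbr i)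
    (p : Fin N → Fin N → ℝ) (δ q : Fin N → ℝ) (hq : ∀ i, 0 ≤ q i) (i : Fin N) :
    q i * (Kuzmin.locMin Nbr δ i - δ i) ≤ ∑ j ∈ Nbr i, Kuzmin.afac Nbr p δ q i j * p i j ∧
    ∑ j ∈ Nbr i, Kuzmin.afac Nbr p δ q i j * p i j ≤ q i * (Kuzmin.locMax Nbr δ i - δ i) := by
  open Kuzmin in
  constructor
  · -- lower bound
    calc q i * (locMin Nbr δ i - δ i) = Qminus Nbr δ q i := rfl
      _ ≤ Rminus Nbr p δ q i * Pminus Nbr p i := Qminus_le_Rminus_mul_Pminus Nbr p δ q hq i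
      _ = ∑ j ∈ Nbr i, Rminus Nbr p δ q i * min 0 (p i j) := by
          rw [Pminus, Finset.mul_sum]
      _ ≤ ∑ j ∈ Nbr i, afac Nbr p δ q i j * p i j := by
          apply Finset.sum_le_sum
          intro j _
          rcases lt_trichotomy (p i j) 0 with hneg | hzero | hpos
          · have habar : abar Nbr p δ q i j = Rminus Nbr p δ q i := by
              unfold abar; rw [if_neg (by linarith), if_pos hneg]
            have h1 : afac Nbr p δ q i j ≤ Rminus Nbr p δ q i :=
              habar ▸ min_le_left _ _
            rw [min_eq_right (le_of_lt hneg)]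
            exact mul_le_mul_of_nonpos_right h1 (le_of_lt hneg)
          · simp [hzero]
          · rw [min_eq_left (le_of_lt hpos), mul_zero]
            exact mul_nonneg (afac_nonneg Nbr p δ q hq i j) (le_of_lt hpos)
  · -- upper bound
    calc ∑ j ∈ Nbr i, afac Nbr p δ q i j * p i j
        ≤ ∑ j ∈ Nbr i, Rplus Nbr p δ q i * max 0 (p i j) := by
          apply Finset.sum_le_sum
          intro j _
          rcases lt_trichotomy (p i j) 0 with hneg | hzero | hpos
          · rw [max_eq_left (le_of_lt hneg), mul_zero]
            exact mul_nonpos_of_nonneg_of_nonpos (afac_nonneg Nbr p δ q hq i j)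
              (le_of_lt hneg)
          · simp [hzero]
          · have habar : abar Nbr p δ q i j = Rplus Nbr p δ q i := by
              unfold abar; rw [if_pos hpos]
            have h1 : afac Nbr p δ q i j ≤ Rplus Nbr p δ q i :=
              habar ▸ min_le_left _ _
            rw [max_eq_right (le_of_lt hpos)]
            exact mul_le_mul_of_nonneg_right h1 (le_of_lt hpos)
      _ = Rplus Nbr p δ q i * Pplus Nbr p i := by rw [Pplus, Finset.mul_sum]
      _ ≤ Qplus Nbr δ q i := Rplus_mul_Pplus_le Nbr p δ q hq i
      _ = q i * (locMax Nbr δ i - δ i) := rfl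
end
end

section
/- Let (Ω, μ) be a finite measure space, let λ > 0 and let a ≤ b be real numbers. Define the admissible set U_ad := { u ∈ L²(μ) : a ≤ u(x) ≤ b for μ-a.e. x }. Then for p ∈ L²(μ) and u ∈ U_ad, the variational inequality ∫_Ω (λ u + p)(v − u) dμ ≥ 0 for all v ∈ U_ad holds if and only if u(x) = max(a, min(b, −λ⁻¹ p(x))) for μ-a.e. x. -/
/-!
Writing `q = -λ⁻¹ p`, the integrand is `λ (u - q) (v - u)`. The projection `P` of `q` onto
`[a, b]` satisfies `(P - q) (c - P) ≥ 0` for every `c ∈ [a, b]`, which gives the variational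
inequality when `u = P`. Conversely, testing with `v = P` bounds the integrand above by
`-λ (u - P)²`, so a nonnegative integral forces `u = P` almost everywhere.
-/

open MeasureTheory Filter

theorem max_min_sub_mul_sub_max_min_nonneg {a b c : ℝ} (q : ℝ) (hc : c ∈ Set.Icc a b) :
    0 ≤ (max a (min b q) - q) * (c - max a (min b q)) := by
  obtain ⟨hac, hcb⟩ := hc
  rcases le_total q a with hqa | haq
  · rw [min_eq_right (hqa.trans (hac.trans hcb)), max_eq_left hqa]
    nlinarith
  rcases le_total b q with hbq | hqb
  · rw [min_eq_left hbq, max_eq_right (hac.trans hcb)]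
    nlinarith
  · rw [min_eq_right hqb, max_eq_right haq]
    simp

theorem sub_mul_max_min_sub_le_neg_sq {a b c : ℝ} (q : ℝ) (hc : c ∈ Set.Icc a b) :
    (c - q) * (max a (min b q) - c) ≤ -(c - max a (min b q)) ^ 2 := by
  nlinarith [max_min_sub_mul_sub_max_min_nonneg q hc]

theorem ae_eq_zero_of_nonpos_of_integral_nonneg {α : Type*} [MeasurableSpace α]
    {μ : Measure α} {f : α → ℝ} (hfi : Integrable f μ) (hf : f ≤ᵐ[μ] 0)
    (hint : 0 ≤ ∫ x, f x ∂μ) : f =ᵐ[μ] 0 :=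
  (integral_eq_iff_of_ae_le hfi (integrable_zero α ℝ μ) hf).1 <| by
    simpa using le_antisymm (integral_nonpos_of_ae hf) hint

/-- on a finite measure space, for `λ > 0`, `a ≤ b`, `p ∈ L²(μ)` and an
admissible control `u ∈ U_ad = {u ∈ L²(μ) : a ≤ u ≤ b a.e.}`, the variational inequality
`∫ (λu + p)(v − u) dμ ≥ 0` for all `v ∈ U_ad` holds if and only if
`u = max(a, min(b, −λ⁻¹ p))` a.e. -/
theorem control_variational_inequality_iff_projection
    {Ω : Type*} [MeasurableSpace Ω] (μ : Measure Ω) [IsFiniteMeasure μ]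
    (lam : ℝ) (hlam : 0 < lam) (a b : ℝ) (hab : a ≤ b)
    (p u : Lp ℝ 2 μ) (hu : ∀ᵐ x ∂μ, a ≤ u x ∧ u x ≤ b) :
    (∀ v : Lp ℝ 2 μ, (∀ᵐ x ∂μ, a ≤ v x ∧ v x ≤ b) →
        0 ≤ ∫ x, (lam * u x + p x) * (v x - u x) ∂μ) ↔
      (∀ᵐ x ∂μ, u x = max a (min b (-lam⁻¹ * p x))) := by
  set q : Ω → ℝ := fun x => -lam⁻¹ * p x
  set P : Ω → ℝ := fun x => max a (min b (q x))
  have integrand_eq (v : Ω → ℝ) (x : Ω) :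
      (lam * u x + p x) * (v x - u x) = lam * ((u x - q x) * (v x - u x)) := by
    simp only [q]
    field_simp
    ring
  have hP_mem (x : Ω) : P x ∈ Set.Icc a b := ⟨le_max_left _ _, max_le hab (min_le_left _ _)⟩
  constructor
  · intro hvi
    have hP : MemLp P 2 μ := memLp_of_bounded (.of_forall hP_mem)
      ((continuous_const.max (continuous_const.min continuous_id)).comp_aestronglyMeasurable
        ((Lp.aestronglyMeasurable p).const_mul _)) 2
    set w := hP.toLp P
    have hwP : w =ᵐ[μ] P := hP.coeFn_toLp
    have hle : ∀ᵐ x ∂μ, (lam * u x + p x) * (w x - u x) ≤ -(lam * (u x - P x) ^ 2) := by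
      filter_upwards [hwP, hu] with x hwx hux
      rw [integrand_eq, hwx]
      nlinarith [sub_mul_max_min_sub_le_neg_sq (q x) hux]
    have hzero : (fun x => (lam * u x + p x) * (w x - u x)) =ᵐ[μ] 0 := by
      refine ae_eq_zero_of_nonpos_of_integral_nonneg
        (((Lp.memLp u).const_mul lam).add (Lp.memLp p) |>.integrable_mul
          ((Lp.memLp w).sub (Lp.memLp u))) ?_ (hvi w ?_)
      · filter_upwards [hle] with x hx
        show _ ≤ 0
        nlinarith [sq_nonneg (u x - P x)]
      · filter_upwards [hwP] with x hwx
        exact hwx ▸ hP_mem x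
    filter_upwards [hzero, hle] with x hx0 hlex
    have hsq : (u x - P x) ^ 2 = 0 := by
      simp only [Pi.zero_apply] at hx0
      nlinarith [sq_nonneg (u x - P x)]
    exact sub_eq_zero.1 (pow_eq_zero_iff two_ne_zero |>.1 hsq)
  · intro huP v hv
    refine integral_nonneg_of_ae ?_
    filter_upwards [huP, hv] with x hux hvx
    rw [Pi.zero_apply, integrand_eq, hux]
    exact mul_nonneg hlam.le (max_min_sub_mul_sub_max_min_nonneg (q x) hvx)
end
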